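/- For 0 < β < 1, λ > 0, and r, s with 0 < r < β, 0 < s < β, r + s = λ, ∫₀^∞ (min{1,u})^{β-λ} u^{r-1} / |1-u|^β du = B(β - r, 1-β) + B(β - s, 1-β). -/

import Mathlib

/-!
Split `(0, ∞)` at `1`. On `(0, 1)` the integrand is `u ^ (β - s - 1) (1 - u) ^ (-β)` because
`r + s = λ`; on `(1, ∞)` the substitution `u = 1 / t` turns it into `t ^ (β - r - 1) (1 - t) ^ (-β)`.
Both are beta integrands, integrable since `r, s < β < 1`.
-/

open MeasureTheory Set

noncomputable def betaFn (a b : ℝ) : ℝ := ∫ t in (0:ℝ)..1, t ^ (a - 1) * (1 - t) ^ (b - 1)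

lemma betaFn_eq_setIntegral_Ioo (a b : ℝ) :
    betaFn a b = ∫ t in Ioo (0:ℝ) 1, t ^ (a - 1) * (1 - t) ^ (b - 1) := by
  rw [betaFn, intervalIntegral.integral_of_le zero_le_one, integral_Ioc_eq_integral_Ioo]

/-- On `(0, 1)` the real beta integrand is the norm of the complex one. -/
lemma integrableOn_betaIntegrand {a b : ℝ} (ha : 0 < a) (hb : 0 < b) :
    IntegrableOn (fun t : ℝ => t ^ (a - 1) * (1 - t) ^ (b - 1)) (Ioo 0 1) := by
  have hF := (Complex.betaIntegral_convergent (u := a) (v := b) (by simpa) (by simpa)).norm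
  rw [intervalIntegrable_iff_integrableOn_Ioo_of_le zero_le_one] at hF
  refine hF.congr_fun (fun t ht => ?_) measurableSet_Ioo
  have h1t : (1 : ℂ) - t = ((1 - t : ℝ) : ℂ) := by push_cast; ring
  dsimp only
  rw [norm_mul, h1t, Complex.norm_cpow_eq_rpow_re_of_pos ht.1,
    Complex.norm_cpow_eq_rpow_re_of_pos (sub_pos.2 ht.2)]
  simp

lemma image_inv_Ioo_zero_one : (·⁻¹) '' Ioo (0:ℝ) 1 = Ioi 1 := by
  rw [Set.image_inv_eq_inv, inv_Ioo_0_left one_pos, inv_one]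

lemma hasDerivWithinAt_inv_Ioo_zero_one (t : ℝ) (ht : t ∈ Ioo (0:ℝ) 1) :
    HasDerivWithinAt (·⁻¹) (-(t ^ 2)⁻¹) (Ioo 0 1) t :=
  (hasDerivAt_inv ht.1.ne').hasDerivWithinAt

section Inversion

variable {E : Type*} [NormedAddCommGroup E] [NormedSpace ℝ E]

lemma integrableOn_Ioi_one_iff_comp_inv {f : ℝ → E} :
    IntegrableOn f (Ioi 1) ↔ IntegrableOn (fun t => (t ^ 2)⁻¹ • f t⁻¹) (Ioo 0 1) := by
  rw [← image_inv_Ioo_zero_one, integrableOn_image_iff_integrableOn_abs_deriv_smul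
    measurableSet_Ioo hasDerivWithinAt_inv_Ioo_zero_one inv_injective.injOn]
  simp only [abs_neg, abs_inv, abs_sq]

lemma integral_Ioi_one_eq_integral_comp_inv (f : ℝ → E) :
    ∫ u in Ioi 1, f u = ∫ t in Ioo 0 1, (t ^ 2)⁻¹ • f t⁻¹ := by
  rw [← image_inv_Ioo_zero_one, integral_image_eq_integral_abs_deriv_smul
    measurableSet_Ioo hasDerivWithinAt_inv_Ioo_zero_one inv_injective.injOn]
  simp only [abs_neg, abs_inv, abs_sq]

lemma integral_Ioi_zero_eq_integral_Ioo_add_integral_comp_inv {f : ℝ → E}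
    (hlow : IntegrableOn f (Ioo 0 1))
    (hhigh : IntegrableOn (fun t => (t ^ 2)⁻¹ • f t⁻¹) (Ioo 0 1)) :
    ∫ u in Ioi 0, f u = (∫ t in Ioo 0 1, f t) + ∫ t in Ioo 0 1, (t ^ 2)⁻¹ • f t⁻¹ := by
  rw [← Ioc_union_Ioi_eq_Ioi zero_le_one, setIntegral_union (Ioc_disjoint_Ioi le_rfl)
    measurableSet_Ioi (by rwa [integrableOn_Ioc_iff_integrableOn_Ioo])
    (integrableOn_Ioi_one_iff_comp_inv.2 hhigh), integral_Ioc_eq_integral_Ioo,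
    integral_Ioi_one_eq_integral_comp_inv]

end Inversion

section Kernel

variable {beta lam r s : ℝ}

lemma kernel_eq_betaIntegrand_of_mem_Ioo (hrs : r + s = lam) {u : ℝ} (hu : u ∈ Ioo 0 1) :
    min 1 u ^ (beta - lam) * u ^ (r - 1) / |1 - u| ^ beta
      = u ^ (beta - s - 1) * (1 - u) ^ (1 - beta - 1) := by
  obtain ⟨hu0, hu1⟩ := hu
  rw [min_eq_right hu1.le, abs_of_pos (sub_pos.2 hu1), div_eq_mul_inv,
    ← Real.rpow_neg (sub_pos.2 hu1).le, ← Real.rpow_add hu0, ← hrs]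
  ring_nf

lemma inv_sq_smul_kernel_inv_eq_betaIntegrand {t : ℝ} (ht : t ∈ Ioo 0 1) :
    (t ^ 2)⁻¹ • (min 1 t⁻¹ ^ (beta - lam) * t⁻¹ ^ (r - 1) / |1 - t⁻¹| ^ beta)
      = t ^ (beta - r - 1) * (1 - t) ^ (1 - beta - 1) := by
  obtain ⟨ht0, ht1⟩ := ht
  have h1t : 0 < 1 - t := sub_pos.2 ht1
  have habs : |1 - t⁻¹| = (1 - t) / t := by
    rw [abs_sub_comm, abs_of_pos (sub_pos.2 ((one_lt_inv₀ ht0).2 ht1))]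
    field_simp
  rw [smul_eq_mul, min_eq_left ((one_le_inv₀ ht0).2 ht1.le), Real.one_rpow, one_mul, habs,
    Real.div_rpow h1t.le ht0.le, Real.inv_rpow ht0.le, ← Real.rpow_natCast,
    ← Real.rpow_neg ht0.le, ← Real.rpow_neg ht0.le, show 1 - beta - 1 = -beta by ring,
    Real.rpow_neg h1t.le]
  field_simp
  rw [← Real.rpow_add ht0, ← Real.rpow_add ht0]
  congr 1
  push_cast
  ring

end Kernel

theorem kernel_constant_min_abs_sub_general
    (beta lam r s : ℝ) (hb1 : beta < 1)
    (hrb : r < beta) (hsb : s < beta)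
    (hrs : r + s = lam) :
    ∫ u in Ioi (0:ℝ), min 1 u ^ (beta - lam) * u ^ (r - 1) / |1 - u| ^ beta
      = betaFn (beta - r) (1 - beta) + betaFn (beta - s) (1 - beta) := by
  have hlow := fun u (hu : u ∈ Ioo (0:ℝ) 1) =>
    kernel_eq_betaIntegrand_of_mem_Ioo (beta := beta) hrs hu
  have hhigh := fun t (ht : t ∈ Ioo (0:ℝ) 1) =>
    inv_sq_smul_kernel_inv_eq_betaIntegrand (beta := beta) (lam := lam) (r := r) ht
  rw [integral_Ioi_zero_eq_integral_Ioo_add_integral_comp_inv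
      ((integrableOn_congr_fun hlow measurableSet_Ioo).2
        (integrableOn_betaIntegrand (by linarith) (by linarith)))
      ((integrableOn_congr_fun hhigh measurableSet_Ioo).2
        (integrableOn_betaIntegrand (by linarith) (by linarith))),
    setIntegral_congr_fun measurableSet_Ioo hlow, setIntegral_congr_fun measurableSet_Ioo hhigh,
    betaFn_eq_setIntegral_Ioo, betaFn_eq_setIntegral_Ioo, add_comm]

theorem kernel_constant_min_abs_sub
    (beta lam r s : ℝ) (hb0 : 0 < beta) (hb1 : beta < 1) (hlam : 0 < lam)
    (hr0 : 0 < r) (hrb : r < beta) (hs0 : 0 < s) (hsb : s < beta)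
    (hrs : r + s = lam) :
    ∫ u in Ioi (0:ℝ), min 1 u ^ (beta - lam) * u ^ (r - 1) / |1 - u| ^ beta
      = betaFn (beta - r) (1 - beta) + betaFn (beta - s) (1 - beta) :=
  kernel_constant_min_abs_sub_general beta lam r s hb1 hrb hsb hrs
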